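/- Let γ > −1 and C > 0. There exist β ≥ 1 and C₀ > 0, depending only on n, γ, p and C, such that the function v(x,t) = C₀(1 − |x + e_n|^{−β}) − t satisfies, at every point of Q₁⁺ = B₁⁺ × (−1,0] and for every a ∈ ℝⁿ with |a| ≤ 1 and every ε ∈ [0,1] with |Dv + a|² + ε² > 0: v_t − (|Dv + a|² + ε²)^{γ/2} · Tr(A[Dv+a] D²v) > 0, where A[z] = I + (p−2) z⊗z/(|z|²+ε²); moreover v ≥ 0 on S₁, v ≥ 1 on ∂_p Q₁⁺ \ S₁, and v(0′, x_n, 0) ≤ C′ x_n for 0 ≤ x_n ≤ 1/2 with C′ depending only on C₀, β. -/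

import Mathlib

/-- Time derivative. -/
noncomputable def timeDeriv {n : ℕ} (u : (Fin n → ℝ) → ℝ → ℝ)
    (x : Fin n → ℝ) (t : ℝ) : ℝ :=
  deriv (fun s => u x s) t

/-- Spatial partial derivative `u_i`. -/
noncomputable def spaceGrad {n : ℕ} (u : (Fin n → ℝ) → ℝ → ℝ)
    (x : Fin n → ℝ) (t : ℝ) (i : Fin n) : ℝ :=
  fderiv ℝ (fun y => u y t) x (Pi.single i 1)

/-- Spatial second derivative `u_{ij}`. -/
noncomputable def spaceHess {n : ℕ} (u : (Fin n → ℝ) → ℝ → ℝ)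
    (x : Fin n → ℝ) (t : ℝ) (i j : Fin n) : ℝ :=
  fderiv ℝ (fun y => spaceGrad u y t j) x (Pi.single i 1)

/-- The operator `v_t - (|Dv+a|²+ε²)^{γ/2} Tr(A[Dv+a] D²v)` where
`A[z] = I + (p-2) z⊗z/(|z|²+ε²)` (the operator `P^ε_{a,1}`). -/
noncomputable def Pop {n : ℕ} (γ p ε : ℝ) (a : Fin n → ℝ)
    (v : (Fin n → ℝ) → ℝ → ℝ) (x : Fin n → ℝ) (t : ℝ) : ℝ :=
  timeDeriv v x t -
    ((∑ i, (spaceGrad v x t i + a i) ^ 2 + ε ^ 2) ^ (γ / 2)) *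
      ∑ i, ∑ j,
        (((if i = j then (1 : ℝ) else 0) +
          (p - 2) * (spaceGrad v x t i + a i) * (spaceGrad v x t j + a j) /
            (∑ k, (spaceGrad v x t k + a k) ^ 2 + ε ^ 2)) * spaceHess v x t i j)

/-- The barrier `v(x,t) = C₀(1 - |x + e_n|^{-β}) - t`. -/
noncomputable def barrierV {n : ℕ} (C₀ β : ℝ) (x : Fin (n + 1) → ℝ) (t : ℝ) : ℝ :=
  C₀ * (1 - (Real.sqrt (∑ i, (x i + (if i = Fin.last n then (1 : ℝ) else 0)) ^ 2)) ^ (-β)) - t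

/-!
Write `y = x + e_n` and `s = |y|²`, so that `v = C₀ (1 - s^{-β/2}) - t` and `1 < s < 4` on `B₁⁺`.
Then `Dv = k y` and `D²v = k (I - (β + 2) y ⊗ y / s)` with `k = C₀ β s^{-β/2-1}`. Whatever the
direction of `z = Dv + a`, a large `β` makes `Tr (A[z] D²v) ≤ -k`, so the operator is at least
`-1 + (|z|² + ε²)^{γ/2} k`. For large `C₀` we have `|Dv| ≥ 2 ≥ 2 |a|`, hence
`1 ≤ |z|² + ε² ≤ (C₀ β + 2)²`, and because `γ > -1` the product `(|z|² + ε²)^{γ/2} k` grows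
like a positive power of `C₀` and eventually exceeds `1`. The boundary inequalities only use
`s ≥ 1` (and `s ≥ 2` on the unit sphere), and on the axis `1 - (1 + x_n)^{-β} ≤ β x_n`.
-/

open Filter Topology

theorem one_sub_rpow_neg_le_mul_sub_one {x β : ℝ} (hx : 0 < x) (hβ : 0 ≤ β) :
    1 - x ^ (-β) ≤ β * (x - 1) := by
  have hexp : 1 - β * Real.log x ≤ x ^ (-β) := by
    rw [Real.rpow_def_of_pos hx]
    linarith [Real.add_one_le_exp (Real.log x * -β)]
  nlinarith [Real.log_le_sub_one_of_pos hx]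

theorem rpow_min_zero_le_rpow_half {γ d R : ℝ} (hR : 0 ≤ R) (hd : 1 ≤ d) (hdR : d ≤ R ^ 2) :
    R ^ min γ 0 ≤ d ^ (γ / 2) := by
  rcases le_or_gt 0 γ with hγ | hγ
  · rw [min_eq_right hγ, Real.rpow_zero]
    exact Real.one_le_rpow hd (by linarith)
  · rw [min_eq_left hγ.le]
    calc R ^ γ = (R ^ 2) ^ (γ / 2) := by
          rw [← Real.rpow_natCast, ← Real.rpow_mul hR]; ring_nf
      _ ≤ d ^ (γ / 2) := Real.rpow_le_rpow_of_nonpos (by linarith) hdR (by linarith)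

theorem le_rpow_mul_of_rpow_inv_le {A K m : ℝ} (hm : -1 < m) (hA : 0 < A) (hK : 2 ≤ K)
    (hAK : (2 * A) ^ (1 / (1 + m)) ≤ K) : A ≤ (K + 2) ^ m * K := by
  have hθ : 0 < 1 + m := by linarith
  have hK2 : 0 < K + 2 := by linarith
  have h2A : 2 * A ≤ (K + 2) ^ (1 + m) :=
    calc 2 * A = ((2 * A) ^ (1 / (1 + m))) ^ (1 + m) := by
          rw [← Real.rpow_mul (by positivity), one_div_mul_cancel hθ.ne', Real.rpow_one]
      _ ≤ (K + 2) ^ (1 + m) := Real.rpow_le_rpow (by positivity) (by linarith) hθ.le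
  have hsplit : (K + 2) ^ (1 + m) = (K + 2) ^ m * (K + 2) := by
    rw [add_comm 1 m, Real.rpow_add_one hK2.ne']
  have hpos : 0 < (K + 2) ^ m := Real.rpow_pos_of_pos hK2 m
  nlinarith

theorem one_lt_rpow_half_mul_inv {γ A K P d : ℝ} (hγ : -1 < γ) (hP : 0 < P) (hPA : P < A)
    (hK : 2 ≤ K) (hKA : (2 * A) ^ (1 / (1 + min γ 0)) ≤ K) (hd : 1 ≤ d) (hdK : d ≤ (K + 2) ^ 2) :
    1 < d ^ (γ / 2) * (K * P⁻¹) := by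
  have hA : 0 < A := hP.trans hPA
  have hAK := le_rpow_mul_of_rpow_inv_le (lt_min hγ (by norm_num)) hA hK hKA
  calc 1 ≤ (K + 2) ^ min γ 0 * K / A := (le_div_iff₀ hA).2 (by linarith)
    _ < (K + 2) ^ min γ 0 * K / P := div_lt_div_of_pos_left (by linarith) hP hPA
    _ = (K + 2) ^ min γ 0 * (K * P⁻¹) := by ring
    _ ≤ d ^ (γ / 2) * (K * P⁻¹) := mul_le_mul_of_nonneg_right
          (rpow_min_zero_le_rpow_half (by linarith) hd hdK) (by positivity)

theorem sum_add_sq_mem_Icc {ι : Type*} [Fintype ι] {u a : ι → ℝ} {r : ℝ}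
    (hu : ∑ i, u i ^ 2 = r ^ 2) (hr : 2 ≤ r) (ha : ∑ i, a i ^ 2 ≤ 1) :
    ∑ i, (u i + a i) ^ 2 ∈ Set.Icc 1 ((r + 1) ^ 2) := by
  set α := √(∑ i, a i ^ 2)
  have hα2 : α ^ 2 = ∑ i, a i ^ 2 := Real.sq_sqrt (Finset.sum_nonneg fun i _ => sq_nonneg _)
  have hα0 : 0 ≤ α := Real.sqrt_nonneg _
  have hα1 : α ≤ 1 := Real.sqrt_le_one.mpr ha
  have hcs : |∑ i, u i * a i| ≤ r * α := by
    refine abs_le_of_sq_le_sq' ?_ (by positivity) |> abs_le.mpr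
    rw [mul_pow, ← hu, hα2]
    exact Finset.sum_mul_sq_le_sq_mul_sq _ _ _
  have hexpand : ∑ i, (u i + a i) ^ 2 = r ^ 2 + 2 * ∑ i, u i * a i + α ^ 2 := by
    simp only [add_sq, Finset.sum_add_distrib, ← hu, hα2, Finset.mul_sum]
    ring_nf
  rw [hexpand]
  constructor <;> nlinarith [abs_le.mp hcs]

theorem sub_add_mul_sub_le_neg_one {N p β l μ : ℝ} (hp : 1 < p) (hβ₁ : N + p ≤ β)
    (hβ₂ : N ≤ (p - 1) * β) (hμ : 0 ≤ μ) (hμl : μ ≤ l) (hl : l ≤ 1) :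
    N - (β + 2) + (p - 2) * (l - (β + 2) * μ) ≤ -1 := by
  rcases le_or_gt 2 p with hp2 | hp2
  · nlinarith [mul_nonneg (sub_nonneg.2 hp2) hμ]
  · nlinarith [mul_nonneg (sub_nonneg.2 hp2.le) (sub_nonneg.2 hμl),
      mul_nonneg (sub_nonneg.2 hp2.le) (sub_nonneg.2 hl)]

theorem sum_sum_ite_add_mul_mul_ite_sub {ι : Type*} [Fintype ι] [DecidableEq ι]
    (z y : ι → ℝ) (c d k b : ℝ) :
    ∑ i, ∑ j, (((if i = j then (1 : ℝ) else 0) + c * z i * z j / d) *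
        (k * ((if i = j then 1 else 0) - b * y i * y j))) =
      k * (Fintype.card ι - b * ∑ i, y i ^ 2 +
        c / d * (∑ i, z i ^ 2 - b * (∑ i, y i * z i) ^ 2)) := by
  have hterm : ∀ i j, ((if i = j then (1 : ℝ) else 0) + c * z i * z j / d) *
      (k * ((if i = j then 1 else 0) - b * y i * y j)) =
      (if i = j then k * (1 - b * y i ^ 2 + c / d * z i ^ 2) else 0) -
        k * b * c / d * (y i * z i) * (y j * z j) := by
    intro i j
    split_ifs with h
    · subst h; ring
    · ring
  simp only [hterm, Finset.sum_sub_distrib, Finset.sum_ite_eq, Finset.mem_univ, if_true,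
    ← Finset.mul_sum, ← Finset.sum_mul, Finset.sum_add_distrib, Finset.sum_const, Finset.card_univ,
    nsmul_eq_mul, mul_one]
  ring

theorem Pop_pos_of_spaceHess_eq {m : ℕ} {γ p ε β k s t : ℝ} {a x y : Fin m → ℝ}
    {v : (Fin m → ℝ) → ℝ → ℝ} (hp : 1 < p) (hβ₁ : m + p ≤ β) (hβ₂ : m ≤ (p - 1) * β)
    (hs : ∑ i, y i ^ 2 = s) (hs0 : 0 < s) (hT : timeDeriv v x t = -1)
    (hH : ∀ i j, spaceHess v x t i j = k * ((if i = j then 1 else 0) - (β + 2) / s * y i * y j))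
    (hd : 0 < ∑ i, (spaceGrad v x t i + a i) ^ 2 + ε ^ 2)
    (hk : 1 < (∑ i, (spaceGrad v x t i + a i) ^ 2 + ε ^ 2) ^ (γ / 2) * k) :
    0 < Pop γ p ε a v x t := by
  have hcs : (∑ i, y i * (spaceGrad v x t i + a i)) ^ 2 ≤
      s * ∑ i, (spaceGrad v x t i + a i) ^ 2 := hs ▸ Finset.sum_mul_sq_le_sq_mul_sq _ _ _
  rw [Pop, hT]
  simp only [hH]
  rw [sum_sum_ite_add_mul_mul_ite_sub, Fintype.card_fin, hs]
  generalize ∑ i, (spaceGrad v x t i + a i) ^ 2 = Z at *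
  generalize ∑ i, y i * (spaceGrad v x t i + a i) = W at *
  set d := Z + ε ^ 2
  have htrace := sub_add_mul_sub_le_neg_one (l := Z / d) (μ := W ^ 2 / (s * d)) hp hβ₁ hβ₂
    (by positivity) (by rw [div_le_div_iff₀ (by positivity) hd]; nlinarith)
    (by rw [div_le_one hd]; exact le_add_of_nonneg_right (sq_nonneg ε))
  have hM := Real.rpow_pos_of_pos hd (γ / 2)
  have hk0 : 0 < k := pos_of_mul_pos_right (by linarith) hM.le
  have heq : (m : ℝ) - (β + 2) / s * s + (p - 2) / d * (Z - (β + 2) / s * W ^ 2) =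
      m - (β + 2) + (p - 2) * (Z / d - (β + 2) * (W ^ 2 / (s * d))) := by
    field_simp
  rw [heq]
  nlinarith [mul_le_mul_of_nonneg_left htrace (mul_pos hM hk0).le]

section ShiftedNormSq

variable {m : ℕ} (c : Fin m → ℝ)

noncomputable def shiftedNormSq (x : Fin m → ℝ) : ℝ := ∑ i, (x i + c i) ^ 2

theorem hasFDerivAt_shiftedNormSq (x : Fin m → ℝ) :
    HasFDerivAt (shiftedNormSq c)
      (∑ i, (2 * (x i + c i)) • ContinuousLinearMap.proj (R := ℝ) (φ := fun _ : Fin m => ℝ) i)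
      x := by
  refine HasFDerivAt.fun_sum fun i _ => ?_
  have hl : HasFDerivAt (fun y : Fin m → ℝ => y i + c i)
      (ContinuousLinearMap.proj (R := ℝ) (φ := fun _ : Fin m => ℝ) i) x :=
    (hasFDerivAt_apply i x).add_const (c i)
  simp only [sq]
  exact (hl.fun_mul hl).congr_fderiv (by
    ext y
    simp only [add_apply, smul_apply,
      ContinuousLinearMap.proj_apply, smul_eq_mul]
    ring)

theorem continuous_shiftedNormSq : Continuous (shiftedNormSq c) := by
  unfold shiftedNormSq; fun_prop

variable {u : (Fin m → ℝ) → ℝ → ℝ} {g g' : ℝ → ℝ} {b t : ℝ}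

theorem spaceGrad_of_eq_comp_shiftedNormSq (hu : ∀ y, u y t = g (shiftedNormSq c y) + b)
    {x : Fin m → ℝ} {g'x : ℝ} (hg : HasDerivAt g g'x (shiftedNormSq c x)) (j : Fin m) :
    spaceGrad u x t j = g'x * (2 * (x j + c j)) := by
  have hv : HasFDerivAt (fun y => u y t) _ x :=
    ((hg.comp_hasFDerivAt x (hasFDerivAt_shiftedNormSq c x)).add_const b).congr_of_eventuallyEq
      (Eventually.of_forall hu)
  rw [spaceGrad, hv.fderiv]
  simp [Pi.single_apply]

theorem spaceHess_of_eq_comp_shiftedNormSq (hu : ∀ y, u y t = g (shiftedNormSq c y) + b)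
    {x : Fin m → ℝ} (hg : ∀ᶠ y in 𝓝 x, HasDerivAt g (g' (shiftedNormSq c y)) (shiftedNormSq c y))
    {g''x : ℝ} (hg' : HasDerivAt g' g''x (shiftedNormSq c x)) (i j : Fin m) :
    spaceHess u x t i j = g' (shiftedNormSq c x) * (2 * if i = j then 1 else 0) +
      g''x * (2 * (x i + c i)) * (2 * (x j + c j)) := by
  have hgrad : (fun y => spaceGrad u y t j) =ᶠ[𝓝 x]
      fun y => g' (shiftedNormSq c y) * (2 * (y j + c j)) := by
    filter_upwards [hg] with y hy using spaceGrad_of_eq_comp_shiftedNormSq c hu hy j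
  have hv : HasFDerivAt (fun y => spaceGrad u y t j) _ x :=
    ((hg'.comp_hasFDerivAt x (hasFDerivAt_shiftedNormSq c x)).mul
      (((hasFDerivAt_apply j x).add_const (c j)).const_mul 2)).congr_of_eventuallyEq hgrad
  rw [spaceHess, hv.fderiv]
  simp only [Function.comp_apply, add_apply, smul_apply,
    ContinuousLinearMap.proj_apply, sum_apply, Pi.single_apply, eq_comm,
    smul_eq_mul, mul_ite, mul_one, mul_zero, Finset.sum_ite_eq, Finset.mem_univ, ↓reduceIte]
  ring

end ShiftedNormSq

section Barrier

variable {n : ℕ} {C₀ β : ℝ}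

noncomputable def lastUnit (n : ℕ) : Fin (n + 1) → ℝ := fun i => if i = Fin.last n then 1 else 0

theorem shiftedNormSq_lastUnit (x : Fin (n + 1) → ℝ) :
    shiftedNormSq (lastUnit n) x = ∑ i, x i ^ 2 + 2 * x (Fin.last n) + 1 := by
  have hterm : ∀ i, (x i + lastUnit n i) ^ 2 =
      x i ^ 2 + if i = Fin.last n then 2 * x i + 1 else 0 := by
    intro i; unfold lastUnit; split_ifs <;> ring
  simp only [shiftedNormSq, hterm, Finset.sum_add_distrib, Finset.sum_ite_eq', Finset.mem_univ,
    if_true]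
  ring

theorem barrierV_eq (x : Fin (n + 1) → ℝ) (t : ℝ) :
    barrierV C₀ β x t = -C₀ * shiftedNormSq (lastUnit n) x ^ (-(β / 2)) + (C₀ - t) := by
  have h0 : 0 ≤ shiftedNormSq (lastUnit n) x := Finset.sum_nonneg fun i _ => sq_nonneg _
  change C₀ * (1 - √(shiftedNormSq (lastUnit n) x) ^ (-β)) - t = _
  rw [Real.sqrt_eq_rpow, ← Real.rpow_mul h0]
  ring_nf

theorem timeDeriv_barrierV (x : Fin (n + 1) → ℝ) (t : ℝ) : timeDeriv (barrierV C₀ β) x t = -1 :=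
  ((hasDerivAt_id t).const_sub _).deriv

theorem spaceGrad_barrierV {x : Fin (n + 1) → ℝ} (hx : 0 < shiftedNormSq (lastUnit n) x)
    (t : ℝ) (j : Fin (n + 1)) :
    spaceGrad (barrierV C₀ β) x t j =
      C₀ * β * shiftedNormSq (lastUnit n) x ^ (-(β / 2) - 1) * (x j + lastUnit n j) := by
  rw [spaceGrad_of_eq_comp_shiftedNormSq _ (barrierV_eq · t)
    (((Real.hasDerivAt_rpow_const (Or.inl hx.ne')).const_mul (-C₀)))]
  ring

theorem spaceHess_barrierV {x : Fin (n + 1) → ℝ} (hx : 0 < shiftedNormSq (lastUnit n) x)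
    (t : ℝ) (i j : Fin (n + 1)) :
    spaceHess (barrierV C₀ β) x t i j =
      C₀ * β * shiftedNormSq (lastUnit n) x ^ (-(β / 2) - 1) *
        ((if i = j then 1 else 0) -
          (β + 2) / shiftedNormSq (lastUnit n) x * (x i + lastUnit n i) *
            (x j + lastUnit n j)) := by
  set s := shiftedNormSq (lastUnit n) x
  have hnear : ∀ᶠ y in 𝓝 x, 0 < shiftedNormSq (lastUnit n) y :=
    (continuous_shiftedNormSq _).continuousAt.eventually (lt_mem_nhds hx)
  rw [spaceHess_of_eq_comp_shiftedNormSq _ (barrierV_eq · t)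
    (g' := fun σ => -C₀ * (-(β / 2) * σ ^ (-(β / 2) - 1)))
    (hnear.mono fun y hy => (Real.hasDerivAt_rpow_const (Or.inl hy.ne')).const_mul (-C₀))
    (((Real.hasDerivAt_rpow_const (Or.inl hx.ne')).const_mul (-(β / 2))).const_mul (-C₀)),
    Real.rpow_sub_one hx.ne' (-(β / 2) - 1)]
  field_simp
  ring

theorem shiftedNormSq_lastUnit_mem_Ioo {x : Fin (n + 1) → ℝ} (hx : ∑ i, x i ^ 2 < 1)
    (hxn : 0 < x (Fin.last n)) : shiftedNormSq (lastUnit n) x ∈ Set.Ioo 1 4 := by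
  have hlast : x (Fin.last n) ^ 2 ≤ ∑ i, x i ^ 2 :=
    Finset.single_le_sum (f := fun i => x i ^ 2) (fun i _ => sq_nonneg _) (Finset.mem_univ _)
  rw [shiftedNormSq_lastUnit]
  constructor <;> nlinarith

theorem Pop_barrierV_pos {γ p ε t : ℝ} {a x : Fin (n + 1) → ℝ} (hγ : -1 < γ) (hp : 1 < p)
    (hβ₁ : ((n + 1 : ℕ) : ℝ) + p ≤ β) (hβ₂ : ((n + 1 : ℕ) : ℝ) ≤ (p - 1) * β)
    (hK : 2 * 4 ^ (β / 2 + 1) ≤ C₀ * β)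
    (hKγ : (2 * 4 ^ (β / 2 + 1)) ^ (1 / (1 + min γ 0)) ≤ C₀ * β)
    (ha : ∑ i, a i ^ 2 ≤ 1) (hε : ε ∈ Set.Icc (0 : ℝ) 1) (hx : ∑ i, x i ^ 2 < 1)
    (hxn : 0 < x (Fin.last n))
    (hd : 0 < ∑ i, (spaceGrad (barrierV C₀ β) x t i + a i) ^ 2 + ε ^ 2) :
    0 < Pop γ p ε a (barrierV C₀ β) x t := by
  obtain ⟨hs1, hs4⟩ := shiftedNormSq_lastUnit_mem_Ioo hx hxn
  have hs0 : 0 < shiftedNormSq (lastUnit n) x := by linarith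
  refine Pop_pos_of_spaceHess_eq (y := fun i => x i + lastUnit n i) hp hβ₁ hβ₂ rfl hs0
    (timeDeriv_barrierV x t) (spaceHess_barrierV hs0 t) hd ?_
  simp only [spaceGrad_barrierV hs0 t]
  set s := shiftedNormSq (lastUnit n) x
  have hβ : 0 ≤ β := by have : (0 : ℝ) ≤ ((n + 1 : ℕ) : ℝ) := Nat.cast_nonneg _; linarith
  set A : ℝ := 4 ^ (β / 2 + 1)
  set P := s ^ (β / 2 + 1)
  set K := C₀ * β
  have hq : s ^ (-(β / 2) - 1) = P⁻¹ := by rw [← Real.rpow_neg hs0.le]; ring_nf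
  rw [hq]
  set k := K * P⁻¹
  have hsP : s ≤ P :=
    calc s = s ^ (1 : ℝ) := (Real.rpow_one s).symm
      _ ≤ P := Real.rpow_le_rpow_of_exponent_le hs1.le (by linarith)
  have hPA : P < A := Real.rpow_lt_rpow hs0.le hs4 (by linarith)
  have hP0 : 0 < P := by linarith
  have hk2 : 2 < k := by
    rw [show k = K / P from (div_eq_mul_inv K P).symm, lt_div_iff₀ hP0]; linarith
  have hsqrt1 : 1 ≤ √s := Real.one_le_sqrt.mpr hs1.le
  have hsqrts : √s ≤ s := Real.sqrt_le_iff.mpr ⟨hs0.le, by nlinarith⟩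
  obtain ⟨hz1, hzr⟩ := sum_add_sq_mem_Icc (u := fun i => k * (x i + lastUnit n i)) (a := a)
    (r := k * √s) (by simp only [mul_pow, ← Finset.mul_sum, Real.sq_sqrt hs0.le]; rfl)
    (by nlinarith) ha
  have hrK : k * √s ≤ K := by
    rw [mul_right_comm, ← div_eq_mul_inv, div_le_iff₀ hP0]; nlinarith
  have hε2 : ε ^ 2 ≤ 1 := pow_le_one₀ hε.1 hε.2
  exact one_lt_rpow_half_mul_inv hγ hP0 hPA (by linarith) hKγ (by nlinarith [sq_nonneg ε])
    (by nlinarith [pow_le_pow_left₀ (by positivity) (add_le_add_right hrK 1) 2])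

theorem barrierV_nonneg_of_last_eq_zero (hC₀ : 0 ≤ C₀) (hβ : 0 ≤ β) {x : Fin (n + 1) → ℝ}
    (hx : x (Fin.last n) = 0) {t : ℝ} (ht : t ≤ 0) : 0 ≤ barrierV C₀ β x t := by
  have hs : 1 ≤ shiftedNormSq (lastUnit n) x := by
    rw [shiftedNormSq_lastUnit, hx]
    linarith [Finset.sum_nonneg fun i (_ : i ∈ Finset.univ) => sq_nonneg (x i)]
  have hpow := Real.rpow_le_one_of_one_le_of_nonpos hs (by linarith : -(β / 2) ≤ 0)
  rw [barrierV_eq]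
  nlinarith

theorem one_le_barrierV_of_parabolic_boundary (hC₀ : 2 ≤ C₀) (hβ : 2 ≤ β)
    {x : Fin (n + 1) → ℝ} {t : ℝ} (hxn : 0 ≤ x (Fin.last n)) (ht : -1 ≤ t) (ht0 : t ≤ 0)
    (hbdry : ∑ i, x i ^ 2 = 1 ∨ t = -1) : 1 ≤ barrierV C₀ β x t := by
  have hs := shiftedNormSq_lastUnit x
  have hs1 : 1 ≤ shiftedNormSq (lastUnit n) x := by
    linarith [Finset.sum_nonneg fun i (_ : i ∈ Finset.univ) => sq_nonneg (x i)]
  have hpow := Real.rpow_le_one_of_one_le_of_nonpos hs1 (by linarith : -(β / 2) ≤ 0)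
  rw [barrierV_eq]
  rcases hbdry with hsphere | rfl
  · have hs2 : 2 ≤ shiftedNormSq (lastUnit n) x := by linarith
    have hhalf : shiftedNormSq (lastUnit n) x ^ (-(β / 2)) ≤ 1 / 2 :=
      calc _ ≤ shiftedNormSq (lastUnit n) x ^ (-1 : ℝ) :=
            Real.rpow_le_rpow_of_exponent_le hs1 (by linarith)
        _ ≤ 1 / 2 := by rw [Real.rpow_neg_one]; exact inv_le_of_inv_le₀ (by norm_num) (by linarith)
    nlinarith
  · nlinarith

theorem barrierV_axis_le (hC₀ : 0 ≤ C₀) (hβ : 0 ≤ β) {xn : ℝ} (hxn : 0 ≤ xn) :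
    barrierV C₀ β (fun i => if i = Fin.last n then xn else 0) 0 ≤ C₀ * β * xn := by
  have hs : shiftedNormSq (lastUnit n) (fun i => if i = Fin.last n then xn else 0) =
      (1 + xn) ^ 2 := by
    rw [shiftedNormSq_lastUnit]
    simp only [ite_pow, ne_eq, OfNat.ofNat_ne_zero, not_false_eq_true, zero_pow,
      Finset.sum_ite_eq', Finset.mem_univ, ↓reduceIte]
    ring
  change C₀ * (1 - √(shiftedNormSq (lastUnit n) _) ^ (-β)) - 0 ≤ _
  rw [hs, Real.sqrt_sq (by linarith)]
  have := one_sub_rpow_neg_le_mul_sub_one (by linarith : 0 < 1 + xn) hβ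
  nlinarith

end Barrier

theorem stmt_15_general {n : ℕ} (γ p : ℝ) (hγ : -1 < γ) (hp : 1 < p) :
    ∃ β : ℝ, 1 ≤ β ∧ ∃ C₀ : ℝ, 0 < C₀ ∧
      (∀ (a : Fin (n + 1) → ℝ) (ε : ℝ),
        (∑ i, (a i) ^ 2) ≤ 1 → ε ∈ Set.Icc (0 : ℝ) 1 →
        ∀ (x : Fin (n + 1) → ℝ) (t : ℝ),
          (∑ i, (x i) ^ 2) < 1 → 0 < x (Fin.last n) → t ∈ Set.Ioc (-1 : ℝ) 0 →
          0 < ∑ i, (spaceGrad (barrierV C₀ β) x t i + a i) ^ 2 + ε ^ 2 →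
          0 < Pop γ p ε a (barrierV C₀ β) x t) ∧
      (∀ (x : Fin (n + 1) → ℝ) (t : ℝ),
        (∑ i, (x i) ^ 2) < 1 → x (Fin.last n) = 0 → t ∈ Set.Ioc (-1 : ℝ) 0 →
        0 ≤ barrierV C₀ β x t) ∧
      (∀ (x : Fin (n + 1) → ℝ) (t : ℝ),
        0 ≤ x (Fin.last n) → (∑ i, (x i) ^ 2) ≤ 1 → -1 ≤ t → t ≤ 0 →
        ((∑ i, (x i) ^ 2) = 1 ∨ t = -1) →
        1 ≤ barrierV C₀ β x t) ∧
      ∃ C' : ℝ, 0 < C' ∧ ∀ xn : ℝ, 0 ≤ xn → xn ≤ 1 / 2 →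
        barrierV C₀ β (fun i => if i = Fin.last n then xn else 0) 0 ≤ C' * xn := by
  set N : ℝ := ((n + 1 : ℕ) : ℝ)
  set β := max (N + p) (N / (p - 1))
  have hN : 1 ≤ N := by simp [N]
  have hβ₁ : N + p ≤ β := le_max_left _ _
  have hβ₂ : N ≤ (p - 1) * β := by
    rw [mul_comm, ← div_le_iff₀ (by linarith)]; exact le_max_right _ _
  have hβ2 : 2 ≤ β := by linarith
  set A : ℝ := 2 * 4 ^ (β / 2 + 1)
  set C₀ := max A (A ^ (1 / (1 + min γ 0)))
  have hA : 2 ≤ A := by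
    linarith [Real.one_le_rpow (by norm_num : (1 : ℝ) ≤ 4) (by linarith : 0 ≤ β / 2 + 1)]
  have hC₀ : 2 ≤ C₀ := hA.trans (le_max_left _ _)
  have hC₀β : C₀ ≤ C₀ * β := le_mul_of_one_le_right (by linarith) (by linarith)
  refine ⟨β, by linarith, C₀, by linarith, fun a ε ha hε x t hx hxn _ hd => ?_,
    fun x t _ hx ht => barrierV_nonneg_of_last_eq_zero (by linarith) (by linarith) hx ht.2,
    fun x t hxn _ ht ht0 hbdry => one_le_barrierV_of_parabolic_boundary hC₀ hβ2 hxn ht ht0 hbdry,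
    C₀ * β, by positivity, fun xn hxn _ => barrierV_axis_le (by linarith) (by linarith) hxn⟩
  exact Pop_barrierV_pos hγ hp hβ₁ hβ₂ ((le_max_left _ _).trans hC₀β)
    ((le_max_right _ _).trans hC₀β) ha hε hx hxn hd

/-- Barrier for the boundary Lipschitz estimate (Lemma 3.1): for `γ > -1`, `p > 1` and
`C > 0` there are `β ≥ 1`, `C₀ > 0` (depending only on `n, γ, p, C`) such that
`v(x,t) = C₀(1-|x+e_n|^{-β}) - t` is a strict supersolution of `P^ε_a v = 0` in `Q₁⁺`
for every `|a| ≤ 1`, `ε ∈ [0,1]` with `|Dv+a|²+ε² > 0`; moreover `v ≥ 0` on `S₁`,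
`v ≥ 1` on `∂_p Q₁⁺ \ S₁`, and `v(0', x_n, 0) ≤ C' x_n` for `0 ≤ x_n ≤ 1/2`. -/
theorem stmt_15 {n : ℕ} (γ p C : ℝ) (hγ : -1 < γ) (hp : 1 < p) (hC : 0 < C) :
    ∃ β : ℝ, 1 ≤ β ∧ ∃ C₀ : ℝ, 0 < C₀ ∧
      (∀ (a : Fin (n + 1) → ℝ) (ε : ℝ),
        (∑ i, (a i) ^ 2) ≤ 1 → ε ∈ Set.Icc (0 : ℝ) 1 →
        ∀ (x : Fin (n + 1) → ℝ) (t : ℝ),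
          (∑ i, (x i) ^ 2) < 1 → 0 < x (Fin.last n) → t ∈ Set.Ioc (-1 : ℝ) 0 →
          0 < ∑ i, (spaceGrad (barrierV C₀ β) x t i + a i) ^ 2 + ε ^ 2 →
          0 < Pop γ p ε a (barrierV C₀ β) x t) ∧
      (∀ (x : Fin (n + 1) → ℝ) (t : ℝ),
        (∑ i, (x i) ^ 2) < 1 → x (Fin.last n) = 0 → t ∈ Set.Ioc (-1 : ℝ) 0 →
        0 ≤ barrierV C₀ β x t) ∧
      (∀ (x : Fin (n + 1) → ℝ) (t : ℝ),
        0 ≤ x (Fin.last n) → (∑ i, (x i) ^ 2) ≤ 1 → -1 ≤ t → t ≤ 0 →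
        ((∑ i, (x i) ^ 2) = 1 ∨ t = -1) →
        1 ≤ barrierV C₀ β x t) ∧
      ∃ C' : ℝ, 0 < C' ∧ ∀ xn : ℝ, 0 ≤ xn → xn ≤ 1 / 2 →
        barrierV C₀ β (fun i => if i = Fin.last n then xn else 0) 0 ≤ C' * xn :=
  stmt_15_general γ p hγ hp
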